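/- arXiv:math/0403486 — 3 statements merged into one kernel-verified Lean document; each statement's English description precedes it below -/
import Mathlib

section
/- Let M be a compact smooth manifold without boundary and e : M → ℝ^k a smooth embedding. Then there exists L > 0 such that for every ε with 0 < ε < L there exists an ε-tubular neighborhood (ν, r) of e. -/
open Metric Set Manifold

/-- `e : M → ℝ^k` is a smooth embedding: a smooth map which is a topological embedding
and whose differential is injective at every point. -/
def IsSmoothEmbedding {n k : ℕ} {M : Type*} [TopologicalSpace M]
    [ChartedSpace (EuclideanSpace ℝ (Fin n)) M] [IsManifold (𝓡 n) (⊤ : ℕ∞) M]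
    (e : M → EuclideanSpace ℝ (Fin k)) : Prop :=
  ContMDiff (𝓡 n) (𝓡 k) (⊤ : ℕ∞) e ∧ Topology.IsEmbedding e ∧
    ∀ y : M, Function.Injective (mfderiv (𝓡 n) (𝓡 k) e y)

/-- `(ν, r)` is an `ε`-tubular neighborhood of the embedding `e : M → ℝ^k`:
`ν` is an open set containing `e(M)` and `r : ν → e(M)` is a continuous retraction such that
(1) `‖x - r x‖ ≤ ‖x - e y‖` for all `x ∈ ν`, `y ∈ M`, with equality iff `r x = e y`; and
(2) the fiber `r⁻¹(e y)` is the open `ε`-ball around `e y` in the affine subspace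
`e y + (range (mfderiv e y))ᗮ`. -/
def IsTubularNbhd {n k : ℕ} {M : Type*} [TopologicalSpace M]
    [ChartedSpace (EuclideanSpace ℝ (Fin n)) M] [IsManifold (𝓡 n) (⊤ : ℕ∞) M]
    (e : M → EuclideanSpace ℝ (Fin k)) (ε : ℝ) (ν : Set (EuclideanSpace ℝ (Fin k)))
    (r : EuclideanSpace ℝ (Fin k) → EuclideanSpace ℝ (Fin k)) : Prop :=
  IsOpen ν ∧ Set.range e ⊆ ν ∧ ContinuousOn r ν ∧ (∀ x ∈ ν, r x ∈ Set.range e) ∧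
  (∀ y : M, r (e y) = e y) ∧
  (∀ x ∈ ν, ∀ y : M, ‖x - r x‖ ≤ ‖x - e y‖ ∧ (‖x - r x‖ = ‖x - e y‖ ↔ r x = e y)) ∧
  (∀ y : M, ∀ x : EuclideanSpace ℝ (Fin k), (x ∈ ν ∧ r x = e y) ↔
    ∃ v : EuclideanSpace ℝ (Fin k),
      (∀ w : TangentSpace (𝓡 n) y,
        inner (𝕜 := ℝ) v (mfderiv (𝓡 n) (𝓡 k) e y w : EuclideanSpace ℝ (Fin k)) = 0) ∧
      ‖v‖ < ε ∧ x = e y + v)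

/-!
Near `e y`, in a chart, Taylor's formula and the injectivity of the differential give
`|⟪v, e y' - e y⟫| ≤ C ‖v‖ ‖e y' - e y‖²` for every vector `v` normal at `y`. Compactness and
injectivity of `e` make this hold with one constant whenever `‖e y' - e y‖ < δ`. Hence, for a
normal `v` shorter than some `L`, `e y` is the unique point of `e(M)` nearest to `e y + v`: nearby
points are ruled out by the estimate, distant ones by the triangle inequality. The tubular
neighbourhood is the `ε`-thickening of `e(M)` with the nearest-point projection: it is continuous
because the minimiser is unique, and its fibres are the normal `ε`-discs because `x - e y` is
normal at `y` whenever `e y` is a point of `e(M)` nearest to `x`.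
-/

open Filter Topology Function
open scoped NNReal RealInnerProductSpace

section Calculus

variable {E F : Type*} [NormedAddCommGroup E] [NormedSpace ℝ E]
  [NormedAddCommGroup F] [NormedSpace ℝ F] {g : E → F} {z₀ : E}

theorem HasStrictFDerivAt.eventually_norm_sub_le_of_antilipschitzWith {g' : E →L[ℝ] F}
    {K : ℝ≥0} (hg : HasStrictFDerivAt g g' z₀) (hK : AntilipschitzWith K g') :
    ∀ᶠ p : E × E in 𝓝 (z₀, z₀), ‖p.1 - p.2‖ ≤ 2 * K * ‖g p.1 - g p.2‖ := by
  have hc : (0 : ℝ) < (2 * ((K : ℝ) + 1))⁻¹ := by positivity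
  filter_upwards [hg.isLittleO.def hc] with p hp
  have hanti : ‖p.1 - p.2‖ ≤ K * ‖g' (p.1 - p.2)‖ := by simpa using hK.le_mul_dist (p.1 - p.2) 0
  have htri := norm_sub_le (g p.1 - g p.2) (g p.1 - g p.2 - g' (p.1 - p.2))
  rw [sub_sub_cancel] at htri
  have hKc : (K : ℝ) * (2 * ((K : ℝ) + 1))⁻¹ ≤ 1 / 2 := by
    rw [← div_eq_mul_inv, div_le_div_iff₀ (by positivity) two_pos]; linarith
  nlinarith [norm_nonneg (p.1 - p.2), norm_nonneg (g' (p.1 - p.2)), K.coe_nonneg]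

theorem norm_sub_sub_fderiv_le_of_lipschitzOnWith {s : Set E} (hs : Convex ℝ s)
    (hg : ∀ z ∈ s, DifferentiableAt ℝ g z) {K : ℝ≥0} (hK : LipschitzOnWith K (fderiv ℝ g) s)
    {z z' : E} (hz : z ∈ s) (hz' : z' ∈ s) :
    ‖g z' - g z - fderiv ℝ g z (z' - z)‖ ≤ K * ‖z' - z‖ ^ 2 := by
  have hseg : segment ℝ z z' ⊆ s := hs.segment_subset hz hz'
  have bound : ∀ w ∈ segment ℝ z z', ‖fderiv ℝ g w - fderiv ℝ g z‖ ≤ K * ‖z' - z‖ :=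
    fun w hw => calc
      _ ≤ K * ‖w - z‖ := by simpa [dist_eq_norm] using hK.dist_le_mul w (hseg hw) z hz
      _ ≤ K * ‖z' - z‖ := by gcongr; exact norm_sub_le_of_mem_segment hw
  calc _ ≤ K * ‖z' - z‖ * ‖z' - z‖ :=
        (convex_segment z z').norm_image_sub_le_of_norm_fderiv_le' (fun w hw => hg w (hseg hw))
          bound (left_mem_segment ℝ z z') (right_mem_segment ℝ z z')
    _ = K * ‖z' - z‖ ^ 2 := by ring

theorem ContDiffAt.exists_eventually_norm_sub_sub_fderiv_le (hg : ContDiffAt ℝ 2 g z₀) :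
    ∃ C : ℝ≥0, ∀ᶠ p : E × E in 𝓝 (z₀, z₀),
      ‖g p.2 - g p.1 - fderiv ℝ g p.1 (p.2 - p.1)‖ ≤ C * ‖p.2 - p.1‖ ^ 2 := by
  obtain ⟨K, t, ht, hK⟩ := (hg.fderiv_right (m := 1) one_add_one_eq_two.le).exists_lipschitzOnWith
  obtain ⟨r, hr, hball⟩ := Metric.mem_nhds_iff.1 (inter_mem ht (hg.eventually (by simp)))
  refine ⟨K, ?_⟩
  filter_upwards [prod_mem_nhds (Metric.ball_mem_nhds z₀ hr) (Metric.ball_mem_nhds z₀ hr)]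
    with p hp
  have hdiff (z) (hz : z ∈ Metric.ball z₀ r) : DifferentiableAt ℝ g z :=
    (show ContDiffAt ℝ 2 g z from (hball hz).2).differentiableAt two_ne_zero
  exact norm_sub_sub_fderiv_le_of_lipschitzOnWith (convex_ball z₀ r) hdiff
    (hK.mono fun z hz => (hball hz).1) hp.1 hp.2

theorem ContDiffAt.exists_eventually_norm_sub_sub_fderiv_le_sq_norm_sub [FiniteDimensional ℝ E]
    (hg : ContDiffAt ℝ 2 g z₀) (hinj : Injective (fderiv ℝ g z₀)) :
    ∃ C : ℝ≥0, ∀ᶠ p : E × E in 𝓝 (z₀, z₀),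
      ‖g p.2 - g p.1 - fderiv ℝ g p.1 (p.2 - p.1)‖ ≤ C * ‖g p.2 - g p.1‖ ^ 2 := by
  obtain ⟨K, -, hK⟩ := (fderiv ℝ g z₀ : E →ₗ[ℝ] F).exists_antilipschitzWith
    (LinearMap.ker_eq_bot.2 hinj)
  obtain ⟨C, hC⟩ := hg.exists_eventually_norm_sub_sub_fderiv_le
  refine ⟨C * (2 * K) ^ 2, ?_⟩
  filter_upwards [hC,
    (hg.hasStrictFDerivAt two_ne_zero).eventually_norm_sub_le_of_antilipschitzWith hK]
    with p hrem hanti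
  rw [norm_sub_rev p.1, norm_sub_rev (g p.1)] at hanti
  calc _ ≤ C * ‖p.2 - p.1‖ ^ 2 := hrem
    _ ≤ C * (2 * K * ‖g p.2 - g p.1‖) ^ 2 := by gcongr
    _ = _ := by push_cast; ring

end Calculus

section Manifold

variable {E F : Type*} [NormedAddCommGroup E] [NormedSpace ℝ E]
  [NormedAddCommGroup F] [InnerProductSpace ℝ F]
  {M : Type*} [TopologicalSpace M] [ChartedSpace E M] {e : M → F}

variable (E e) in
def normalSpace (y : M) : Set F :=
  {v | ∀ w : TangentSpace 𝓘(ℝ, E) y, ⟪v, (mfderiv 𝓘(ℝ, E) 𝓘(ℝ, F) e y w : F)⟫ = 0}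

variable [IsManifold 𝓘(ℝ, E) 2 M]

theorem fderiv_comp_chartAt_symm (he : MDifferentiable 𝓘(ℝ, E) 𝓘(ℝ, F) e) {y₀ : M} {z : E}
    (hz : z ∈ (chartAt E y₀).target) :
    fderiv ℝ (e ∘ (chartAt E y₀).symm) z =
      (mfderiv 𝓘(ℝ, E) 𝓘(ℝ, F) e ((chartAt E y₀).symm z)).comp
        (mfderiv 𝓘(ℝ, E) 𝓘(ℝ, E) (chartAt E y₀).symm z) := by
  rw [← mfderiv_eq_fderiv]
  exact mfderiv_comp z (he _) ((mdifferentiable_chart y₀).mdifferentiableAt_symm hz)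

theorem mem_normalSpace_iff_fderiv_comp_chartAt_symm
    (he : MDifferentiable 𝓘(ℝ, E) 𝓘(ℝ, F) e) {y₀ : M} {z : E}
    (hz : z ∈ (chartAt E y₀).target) {v : F} :
    v ∈ normalSpace E e ((chartAt E y₀).symm z) ↔
      ∀ w : E, ⟪v, fderiv ℝ (e ∘ (chartAt E y₀).symm) z w⟫ = 0 := by
  rw [fderiv_comp_chartAt_symm he hz]
  exact ((mdifferentiable_chart y₀).symm.mfderiv_surjective hz).forall

theorem injective_fderiv_comp_chartAt_symm (he : MDifferentiable 𝓘(ℝ, E) 𝓘(ℝ, F) e)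
    {y₀ : M} {z : E} (hz : z ∈ (chartAt E y₀).target)
    (hinj : Injective (mfderiv 𝓘(ℝ, E) 𝓘(ℝ, F) e ((chartAt E y₀).symm z))) :
    Injective (fderiv ℝ (e ∘ (chartAt E y₀).symm) z) := by
  rw [fderiv_comp_chartAt_symm he hz]
  exact hinj.comp ((mdifferentiable_chart y₀).symm.mfderiv_injective hz)

theorem ContMDiff.contDiffAt_comp_chartAt_symm (he : ContMDiff 𝓘(ℝ, E) 𝓘(ℝ, F) 2 e) {y₀ : M}
    {z : E} (hz : z ∈ (chartAt E y₀).target) :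
    ContDiffAt ℝ 2 (e ∘ (chartAt E y₀).symm) z :=
  ((he.contMDiffOn (s := Set.univ)).comp (contMDiffOn_chart_symm (x := y₀))
    (Set.mapsTo_univ _ _)
    |>.contDiffOn).contDiffAt ((chartAt E y₀).open_target.mem_nhds hz)

theorem exists_eventually_abs_inner_sub_le [FiniteDimensional ℝ E]
    (he : ContMDiff 𝓘(ℝ, E) 𝓘(ℝ, F) 2 e) (hinj : ∀ y, Injective (mfderiv 𝓘(ℝ, E) 𝓘(ℝ, F) e y))
    (y₀ : M) :
    ∃ C : ℝ, ∀ᶠ p : M × M in 𝓝 (y₀, y₀), ∀ v ∈ normalSpace E e p.1,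
      |⟪v, e p.2 - e p.1⟫| ≤ C * ‖v‖ * ‖e p.2 - e p.1‖ ^ 2 := by
  set φ := chartAt E y₀
  have hmd : MDifferentiable 𝓘(ℝ, E) 𝓘(ℝ, F) e := he.mdifferentiable two_ne_zero
  have hz₀ : φ y₀ ∈ φ.target := φ.map_source (mem_chart_source E y₀)
  have hinj₀ := injective_fderiv_comp_chartAt_symm hmd hz₀ (hinj _)
  obtain ⟨C, hC⟩ := (he.contDiffAt_comp_chartAt_symm hz₀)
    |>.exists_eventually_norm_sub_sub_fderiv_le_sq_norm_sub hinj₀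
  have hφ : ContinuousAt (Prod.map φ φ) (y₀, y₀) :=
    (φ.continuousAt (mem_chart_source E y₀)).prodMap (φ.continuousAt (mem_chart_source E y₀))
  refine ⟨C, ?_⟩
  filter_upwards [hφ.eventually hC, prod_mem_nhds (chart_source_mem_nhds E y₀)
    (chart_source_mem_nhds E y₀)] with ⟨y, y'⟩ hrem ⟨hy, hy'⟩ v hv
  dsimp only [Prod.map, Function.comp_apply] at hrem hy hy' hv ⊢
  rw [φ.left_inv hy, φ.left_inv hy'] at hrem
  have horth : ⟪v, fderiv ℝ (e ∘ φ.symm) (φ y) (φ y' - φ y)⟫ = 0 :=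
    (mem_normalSpace_iff_fderiv_comp_chartAt_symm hmd (φ.map_source hy)).1
      (by rwa [φ.left_inv hy]) _
  calc |⟪v, e y' - e y⟫| = |⟪v, e y' - e y - fderiv ℝ (e ∘ φ.symm) (φ y) (φ y' - φ y)⟫| := by
        rw [inner_sub_right _ (e y' - e y), horth, sub_zero]
    _ ≤ ‖v‖ * ‖e y' - e y - fderiv ℝ (e ∘ φ.symm) (φ y) (φ y' - φ y)‖ :=
        abs_real_inner_le_norm _ _
    _ ≤ ‖v‖ * (C * ‖e y' - e y‖ ^ 2) := by gcongr
    _ = C * ‖v‖ * ‖e y' - e y‖ ^ 2 := by ring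

theorem sub_mem_normalSpace_of_forall_norm_sub_le (he : ContMDiff 𝓘(ℝ, E) 𝓘(ℝ, F) 2 e)
    {x : F} {y₀ : M} (hmin : ∀ y, ‖x - e y₀‖ ≤ ‖x - e y‖) : x - e y₀ ∈ normalSpace E e y₀ := by
  set φ := chartAt E y₀
  set g := e ∘ φ.symm
  have hz₀ : φ y₀ ∈ φ.target := φ.map_source (mem_chart_source E y₀)
  have hgz₀ : g (φ y₀) = e y₀ := congrArg e (φ.left_inv (mem_chart_source E y₀))
  have hloc : IsLocalMin (fun z => ‖x - g z‖ ^ 2) (φ y₀) := by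
    filter_upwards [φ.open_target.mem_nhds hz₀] with z hz
    rw [hgz₀]
    gcongr
    exact hmin _
  have hderiv := ((he.contDiffAt_comp_chartAt_symm hz₀).differentiableAt two_ne_zero
    |>.hasFDerivAt.const_sub x).norm_sq
  have hzero := hloc.hasFDerivAt_eq_zero hderiv
  have hy₀ : y₀ = φ.symm (φ y₀) := (φ.left_inv (mem_chart_source E y₀)).symm
  rw [hy₀, mem_normalSpace_iff_fderiv_comp_chartAt_symm (he.mdifferentiable two_ne_zero) hz₀]
  intro w
  have hw := DFunLike.congr_fun hzero w
  simp only [smul_apply, ContinuousLinearMap.comp_apply,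
    neg_apply, coe_innerSL_apply, inner_neg_right, smul_neg,
    zero_apply, neg_eq_zero, smul_eq_zero] at hw
  exact hw.resolve_left two_ne_zero

end Manifold

theorem norm_lt_norm_sub_of_two_mul_inner_lt {F : Type*} [NormedAddCommGroup F]
    [InnerProductSpace ℝ F] {v d : F} (h : 2 * ⟪v, d⟫ < ‖d‖ ^ 2) :
    ‖v‖ < ‖v - d‖ := by
  have : ‖v‖ ^ 2 < ‖v - d‖ ^ 2 := by rw [norm_sub_sq_real]; linarith
  exact lt_of_pow_lt_pow_left₀ 2 (norm_nonneg _) this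

section Compactness

variable {X : Type*} [TopologicalSpace X] [CompactSpace X]

theorem exists_pos_forall_dist_lt_of_eventually_nhdsSet_diagonal {α : Type*} [MetricSpace α]
    {f : X → α} (hf : Continuous f) (hinj : Injective f) {P : X × X → Prop}
    (hP : ∀ᶠ p in 𝓝ˢ (Set.diagonal X), P p) :
    ∃ δ > 0, ∀ a b, dist (f a) (f b) < δ → P (a, b) := by
  obtain ⟨W, hWo, hdiag, hWP⟩ := mem_nhdsSet_iff_exists.1 hP
  have hpos : ∀ p ∈ Wᶜ, 0 < dist (f p.1) (f p.2) := fun p hp =>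
    dist_pos.2 fun h => hp (hdiag (hinj h))
  obtain ⟨δ, hδ, hle⟩ := hWo.isClosed_compl.isCompact.exists_forall_le'
    ((hf.comp continuous_fst).dist (hf.comp continuous_snd)).continuousOn hpos
  exact ⟨δ, hδ, fun a b hab => hWP (by_contra fun h => (hle _ h).not_gt hab)⟩

variable {F : Type*} [NormedAddCommGroup F] [InnerProductSpace ℝ F] {e : X → F}
  {N : X → Set F}

theorem exists_forall_abs_inner_le_of_forall_eventually (he : Continuous e) (hinj : Injective e)
    (hloc : ∀ y₀, ∃ C : ℝ, ∀ᶠ p : X × X in 𝓝 (y₀, y₀), ∀ v ∈ N p.1,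
      |⟪v, e p.2 - e p.1⟫| ≤ C * ‖v‖ * ‖e p.2 - e p.1‖ ^ 2) :
    ∃ C δ : ℝ, 0 < δ ∧ ∀ y y', ‖e y' - e y‖ < δ → ∀ v ∈ N y,
      |⟪v, e y' - e y⟫| ≤ C * ‖v‖ * ‖e y' - e y‖ ^ 2 := by
  let Q (C : ℝ) (p : X × X) : Prop :=
    ∀ v ∈ N p.1, |⟪v, e p.2 - e p.1⟫| ≤ C * ‖v‖ * ‖e p.2 - e p.1‖ ^ 2
  have hmono {C C' : ℝ} {p : X × X} (hC : C ≤ C') (hQ : Q C p) : Q C' p := fun v hv =>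
    (hQ v hv).trans (by gcongr)
  -- The constant is a point of `atTop`, so compactness of the diagonal makes it uniform.
  have hprod : ∀ᶠ q : ℝ × (X × X) in atTop ×ˢ 𝓝ˢ (Set.diagonal X), Q q.1 q.2 := by
    refine isCompact_diagonal.mem_prod_nhdsSet_of_forall ?_
    rintro ⟨y, _⟩ (rfl : y = _)
    obtain ⟨C, hC⟩ := hloc y
    exact ((eventually_ge_atTop C).prod_mk hC).mono fun q hq => hmono hq.1 hq.2
  obtain ⟨C, hC⟩ := hprod.curry.exists
  obtain ⟨δ, hδ, hP⟩ := exists_pos_forall_dist_lt_of_eventually_nhdsSet_diagonal he hinj hC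
  exact ⟨C, δ, hδ, fun y y' hyy' => hP y y' (by rwa [dist_eq_norm, norm_sub_rev])⟩

theorem exists_pos_norm_lt_norm_add_sub (he : Continuous e) (hinj : Injective e)
    (hloc : ∀ y₀, ∃ C : ℝ, ∀ᶠ p : X × X in 𝓝 (y₀, y₀), ∀ v ∈ N p.1,
      |⟪v, e p.2 - e p.1⟫| ≤ C * ‖v‖ * ‖e p.2 - e p.1‖ ^ 2) :
    ∃ L > 0, ∀ y, ∀ v ∈ N y, ‖v‖ < L → ∀ y', y' ≠ y → ‖v‖ < ‖e y + v - e y'‖ := by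
  obtain ⟨C, δ, hδ, hquad⟩ := exists_forall_abs_inner_le_of_forall_eventually he hinj hloc
  refine ⟨min (δ / 2) (1 / (2 * (|C| + 1))), lt_min (by positivity) (by positivity),
    fun y v hv hvL y' hy' => ?_⟩
  rw [show e y + v - e y' = v - (e y' - e y) by abel]
  set d := e y' - e y
  have hd : 0 < ‖d‖ := norm_pos_iff.2 (sub_ne_zero.2 (hinj.ne hy'))
  rcases lt_or_ge ‖d‖ δ with hnear | hfar
  · refine norm_lt_norm_sub_of_two_mul_inner_lt ?_
    have hCv : 2 * C * ‖v‖ < 1 := by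
      have h := (lt_div_iff₀ (by positivity)).1 (lt_min_iff.1 hvL).2
      nlinarith [le_abs_self C, norm_nonneg v]
    calc 2 * ⟪v, d⟫ ≤ 2 * (C * ‖v‖ * ‖d‖ ^ 2) := by
          gcongr; exact (le_abs_self _).trans (hquad y y' hnear v hv)
      _ = (2 * C * ‖v‖) * ‖d‖ ^ 2 := by ring
      _ < ‖d‖ ^ 2 := by nlinarith [pow_pos hd 2]
  · have := norm_sub_norm_le d v
    rw [norm_sub_rev d v] at this
    linarith [(lt_min_iff.1 hvL).1]

end Compactness

section NearestPoint

variable {X F : Type*} [TopologicalSpace X] [CompactSpace X] [NormedAddCommGroup F]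
  {e : X → F} {N : X → Set F} {L ε : ℝ} {x : F}

/-- A point of `s` nearest to `x`; a junk value when there is none. -/
noncomputable def nearestPoint (s : Set F) (x : F) : F :=
  Classical.epsilon fun z => z ∈ s ∧ IsMinOn (fun z => ‖x - z‖) s z

theorem IsCompact.nearestPoint_mem_and_isMinOn {s : Set F} (hs : IsCompact s) (hne : s.Nonempty)
    (x : F) : nearestPoint s x ∈ s ∧ IsMinOn (fun z => ‖x - z‖) s (nearestPoint s x) :=
  Classical.epsilon_spec
    (hs.exists_isMinOn hne (continuous_const.sub continuous_id).norm.continuousOn)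

theorem continuousAt_of_isMinOn_of_unique {Z Y : Type*} [TopologicalSpace Z] [TopologicalSpace Y]
    {K : Set Y} (hK : IsCompact K) {f : Z → Y → ℝ} (hf : Continuous (uncurry f)) {g : Z → Y}
    (hgK : ∀ z, g z ∈ K) (hg : ∀ z, IsMinOn (f z) K (g z)) {z₀ : Z}
    (huniq : ∀ y ∈ K, IsMinOn (f z₀) K y → y = g z₀) : ContinuousAt g z₀ := by
  refine hK.tendsto_nhds_of_unique_mapClusterPt (.of_forall hgK) fun y hyK hy =>
    huniq y hyK (isMinOn_iff.2 fun y' hy' => ?_)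
  by_contra hlt
  have hopen : ∀ᶠ p : Z × Y in 𝓝 (z₀, y), f p.1 y' < f p.1 p.2 :=
    (isOpen_lt (hf.comp (continuous_fst.prodMk continuous_const)) hf).mem_nhds (not_le.1 hlt)
  obtain ⟨U, hU, V, hV, hUV⟩ := mem_nhds_prod_iff.1 hopen
  obtain ⟨z, hzV, hzU⟩ := ((hy.frequently hV).and_eventually hU).exists
  exact (hUV (Set.mk_mem_prod hzU hzV)).not_ge (isMinOn_iff.1 (hg z) y' hy')

theorem nearestPoint_mem_and_isMinOn_of_mem_thickening (he : Continuous e)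
    (hx : x ∈ thickening ε (range e)) (x' : F) :
    nearestPoint (range e) x' ∈ range e ∧
      IsMinOn (fun z => ‖x' - z‖) (range e) (nearestPoint (range e) x') :=
  (isCompact_range he).nearestPoint_mem_and_isMinOn
    ((mem_thickening_iff.1 hx).imp fun _ h => h.1) x'

theorem norm_sub_nearestPoint_lt (he : Continuous e) (hx : x ∈ thickening ε (range e)) :
    ‖x - nearestPoint (range e) x‖ < ε := by
  obtain ⟨_, ⟨y, rfl⟩, hy⟩ := mem_thickening_iff.1 hx
  have hmin := (nearestPoint_mem_and_isMinOn_of_mem_thickening he hx x).2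
  exact (isMinOn_iff.1 hmin _ ⟨y, rfl⟩).trans_lt (by rwa [← dist_eq_norm])

theorem nearestPoint_range_apply (he : Continuous e) (hε : 0 < ε) (y : X) :
    nearestPoint (range e) (e y) = e y := by
  have hmin := (nearestPoint_mem_and_isMinOn_of_mem_thickening (ε := ε) he
    (self_subset_thickening hε _ ⟨y, rfl⟩) (e y)).2
  have h := isMinOn_iff.1 hmin _ ⟨y, rfl⟩
  rw [sub_self, norm_zero, norm_le_zero_iff, sub_eq_zero] at h
  exact h.symm

theorem norm_sub_nearestPoint_lt_norm_sub (he : Continuous e)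
    (hmin : ∀ x y, (∀ y', ‖x - e y‖ ≤ ‖x - e y'‖) → x - e y ∈ N y)
    (hsep : ∀ y, ∀ v ∈ N y, ‖v‖ < L → ∀ y', y' ≠ y → ‖v‖ < ‖e y + v - e y'‖)
    (hx : x ∈ thickening L (range e)) {y : X} (hy : e y ≠ nearestPoint (range e) x) :
    ‖x - nearestPoint (range e) x‖ < ‖x - e y‖ := by
  obtain ⟨⟨p, hp⟩, hpmin⟩ := nearestPoint_mem_and_isMinOn_of_mem_thickening he hx x
  have hxp := norm_sub_nearestPoint_lt he hx
  rw [← hp] at hy hpmin hxp ⊢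
  have hnormal := hmin x p fun y' => isMinOn_iff.1 hpmin _ ⟨y', rfl⟩
  simpa using hsep p _ hnormal hxp y fun h => hy (congrArg e h)

theorem continuousOn_nearestPoint (he : Continuous e)
    (hmin : ∀ x y, (∀ y', ‖x - e y‖ ≤ ‖x - e y'‖) → x - e y ∈ N y)
    (hsep : ∀ y, ∀ v ∈ N y, ‖v‖ < L → ∀ y', y' ≠ y → ‖v‖ < ‖e y + v - e y'‖) :
    ContinuousOn (nearestPoint (range e)) (thickening L (range e)) := by
  intro x hx
  have hspec := nearestPoint_mem_and_isMinOn_of_mem_thickening he hx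
  refine (continuousAt_of_isMinOn_of_unique (isCompact_range he) (f := fun x z => ‖x - z‖)
    (continuous_fst.sub continuous_snd).norm (fun x' => (hspec x').1) (fun x' => (hspec x').2)
    ?_).continuousWithinAt
  rintro _ ⟨y, rfl⟩ hy
  by_contra hne
  exact (norm_sub_nearestPoint_lt_norm_sub he hmin hsep hx hne).not_ge
    (isMinOn_iff.1 hy _ (hspec x).1)

theorem norm_sub_nearestPoint_le_and_eq_iff (he : Continuous e)
    (hmin : ∀ x y, (∀ y', ‖x - e y‖ ≤ ‖x - e y'‖) → x - e y ∈ N y)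
    (hsep : ∀ y, ∀ v ∈ N y, ‖v‖ < L → ∀ y', y' ≠ y → ‖v‖ < ‖e y + v - e y'‖)
    (hx : x ∈ thickening L (range e)) (y : X) :
    ‖x - nearestPoint (range e) x‖ ≤ ‖x - e y‖ ∧
      (‖x - nearestPoint (range e) x‖ = ‖x - e y‖ ↔ nearestPoint (range e) x = e y) := by
  refine ⟨isMinOn_iff.1 (nearestPoint_mem_and_isMinOn_of_mem_thickening he hx x).2 _ ⟨y, rfl⟩,
    fun heq => by_contra fun hne => ?_, fun h => by rw [h]⟩
  exact (norm_sub_nearestPoint_lt_norm_sub he hmin hsep hx (Ne.symm hne)).ne heq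

theorem mem_thickening_and_nearestPoint_eq_iff (he : Continuous e)
    (hmin : ∀ x y, (∀ y', ‖x - e y‖ ≤ ‖x - e y'‖) → x - e y ∈ N y)
    (hsep : ∀ y, ∀ v ∈ N y, ‖v‖ < L → ∀ y', y' ≠ y → ‖v‖ < ‖e y + v - e y'‖)
    (hεL : ε ≤ L) (y : X) :
    x ∈ thickening ε (range e) ∧ nearestPoint (range e) x = e y ↔
      ∃ v ∈ N y, ‖v‖ < ε ∧ x = e y + v := by
  constructor
  · rintro ⟨hx, hxy⟩
    have hymin := (nearestPoint_mem_and_isMinOn_of_mem_thickening he hx x).2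
    rw [hxy] at hymin
    refine ⟨x - e y, hmin x y fun y' => isMinOn_iff.1 hymin _ ⟨y', rfl⟩, ?_, by abel⟩
    exact hxy ▸ norm_sub_nearestPoint_lt he hx
  · rintro ⟨v, hv, hvε, rfl⟩
    have hx : e y + v ∈ thickening ε (range e) :=
      mem_thickening_iff.2 ⟨e y, ⟨y, rfl⟩, by simpa [dist_eq_norm] using hvε⟩
    refine ⟨hx, by_contra fun hne => ?_⟩
    obtain ⟨⟨p, hp⟩, hpmin⟩ := nearestPoint_mem_and_isMinOn_of_mem_thickening he hx (e y + v)
    have hfar := hsep y v hv (hvε.trans_le hεL) p fun h => hne (h ▸ hp.symm)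
    have hnear := isMinOn_iff.1 hpmin _ ⟨y, rfl⟩
    rw [← hp] at hnear
    simp only [add_sub_cancel_left] at hnear
    exact hfar.not_ge hnear

end NearestPoint

/-- Tubular neighborhood theorem: for a compact smooth embedded manifold there is `L > 0`
such that every `0 < ε < L` admits an `ε`-tubular neighborhood. -/
theorem stmt0 {n k : ℕ} {M : Type*} [TopologicalSpace M]
    [ChartedSpace (EuclideanSpace ℝ (Fin n)) M] [IsManifold (𝓡 n) (⊤ : ℕ∞) M]
    [CompactSpace M]
    (e : M → EuclideanSpace ℝ (Fin k)) (he : IsSmoothEmbedding (n := n) e) :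
    ∃ L : ℝ, 0 < L ∧ ∀ ε : ℝ, 0 < ε → ε < L →
      ∃ (ν : Set (EuclideanSpace ℝ (Fin k)))
        (r : EuclideanSpace ℝ (Fin k) → EuclideanSpace ℝ (Fin k)),
        IsTubularNbhd (n := n) e ε ν r := by
  obtain ⟨hsmooth, hemb, hinj⟩ := he
  have hC2 : ContMDiff (𝓡 n) (𝓡 k) 2 e := hsmooth.of_le (WithTop.coe_le_coe.2 le_top)
  have hcont := hsmooth.continuous
  have hmin := fun x y => sub_mem_normalSpace_of_forall_norm_sub_le hC2 (x := x) (y₀ := y)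
  obtain ⟨L, hL, hsep⟩ := exists_pos_norm_lt_norm_add_sub hcont hemb.injective
    (exists_eventually_abs_inner_sub_le hC2 hinj)
  refine ⟨L, hL, fun ε hε hεL => ⟨thickening ε (range e), nearestPoint (range e),
    isOpen_thickening, self_subset_thickening hε _,
    (continuousOn_nearestPoint hcont hmin hsep).mono (thickening_mono hεL.le _),
    fun x hx => (nearestPoint_mem_and_isMinOn_of_mem_thickening hcont hx x).1,
    nearestPoint_range_apply hcont hε,
    fun x hx => norm_sub_nearestPoint_le_and_eq_iff hcont hmin hsep (thickening_mono hεL.le _ hx),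
    fun y x => mem_thickening_and_nearestPoint_eq_iff hcont hmin hsep hεL.le y⟩⟩
end

section
/- Let M be a compact smooth manifold without boundary, e : M → ℝ^k a smooth embedding, and (ν, r) an ε-tubular neighborhood of e. Then for every v ∈ ℝ^k with v ∉ ν and every y ∈ M one has ‖v − e(y)‖ ≥ ε. Consequently the Alexander–Atiyah duality map α(v, y) = v − e(y) sends (ℝ^k − ν) × M into the complement ℝ^k − B_ε(0) of the open ball of radius ε about the origin. -/
/-!
Suppose `‖v - e y‖ < ε`. By compactness `v` has a nearest point `e y₀` on `e(M)`, and
`e y₀` stays a nearest point for every `x` on the segment from `e y₀` to `v`. Such an `x`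
close to `e y₀` lies in the open set `ν`, so `r x = e y₀` and the fiber description makes
`x - e y₀`, hence its positive multiple `v - e y₀`, normal to `e(M)` at `y₀`. Since
`‖v - e y₀‖ ≤ ‖v - e y‖ < ε`, the fiber description read backwards puts `v` in `ν`.
-/

open Metric Set Manifold

open Filter Topology

theorem Wbtw.dist_le_dist_of_dist_le {V P : Type*} [NormedAddCommGroup V] [NormedSpace ℝ V]
    [MetricSpace P] [NormedAddTorsor V P] {p x v s : P} (hx : Wbtw ℝ p x v)
    (hp : dist v p ≤ dist v s) : dist x p ≤ dist x s := by
  have := hx.dist_add_dist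
  linarith [dist_triangle v x s, dist_comm x p, dist_comm x v, dist_comm v p]

theorem norm_lineMap_sub_le_of_norm_sub_le {E : Type*} [NormedAddCommGroup E] [NormedSpace ℝ E]
    {p v s : E} {t : ℝ} (ht : t ∈ Icc (0 : ℝ) 1) (hp : ‖v - p‖ ≤ ‖v - s‖) :
    ‖AffineMap.lineMap p v t - p‖ ≤ ‖AffineMap.lineMap p v t - s‖ := by
  simp only [← dist_eq_norm] at hp ⊢
  exact Wbtw.dist_le_dist_of_dist_le ⟨t, ht, rfl⟩ hp

section Tubular

variable {n k : ℕ} {M : Type*} [TopologicalSpace M]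
  [ChartedSpace (EuclideanSpace ℝ (Fin n)) M] {e : M → EuclideanSpace ℝ (Fin k)}

def IsNormalVector (e : M → EuclideanSpace ℝ (Fin k)) (y : M)
    (u : EuclideanSpace ℝ (Fin k)) : Prop :=
  ∀ w : TangentSpace (𝓡 n) y,
    inner (𝕜 := ℝ) u (mfderiv (𝓡 n) (𝓡 k) e y w : EuclideanSpace ℝ (Fin k)) = 0

theorem IsNormalVector.of_smul {y : M} {u : EuclideanSpace ℝ (Fin k)} {t : ℝ} (ht : t ≠ 0)
    (hu : IsNormalVector (n := n) e y (t • u)) : IsNormalVector (n := n) e y u := fun w =>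
  (mul_eq_zero.1 ((real_inner_smul_left _ _ t).symm.trans (hu w))).resolve_left ht

namespace IsTubularNbhd

variable [IsManifold (𝓡 n) (⊤ : ℕ∞) M] {ε : ℝ} {ν : Set (EuclideanSpace ℝ (Fin k))}
  {r : EuclideanSpace ℝ (Fin k) → EuclideanSpace ℝ (Fin k)}

theorem retract_eq_of_forall_norm_le (h : IsTubularNbhd (n := n) e ε ν r)
    {x : EuclideanSpace ℝ (Fin k)} (hx : x ∈ ν) {y₀ : M}
    (hy₀ : ∀ y, ‖x - e y₀‖ ≤ ‖x - e y‖) : r x = e y₀ := by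
  obtain ⟨-, -, -, hrmem, -, hmin, -⟩ := h
  obtain ⟨y, hy⟩ := hrmem x hx
  exact (hmin x hx y₀).2.1 (le_antisymm (hmin x hx y₀).1 (hy ▸ hy₀ y))

theorem isNormalVector_sub_of_retract_eq (h : IsTubularNbhd (n := n) e ε ν r)
    {x : EuclideanSpace ℝ (Fin k)} (hx : x ∈ ν) {y : M}
    (hrx : r x = e y) : IsNormalVector (n := n) e y (x - e y) := by
  obtain ⟨u, hu, -, rfl⟩ := (h.2.2.2.2.2.2 y x).1 ⟨hx, hrx⟩
  rw [add_sub_cancel_left]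
  exact hu

theorem add_mem_of_isNormalVector (h : IsTubularNbhd (n := n) e ε ν r)
    {y : M} {u : EuclideanSpace ℝ (Fin k)}
    (hu : IsNormalVector (n := n) e y u) (hεu : ‖u‖ < ε) : e y + u ∈ ν :=
  ((h.2.2.2.2.2.2 y _).2 ⟨u, hu, hεu, rfl⟩).1

theorem eventually_lineMap_mem (h : IsTubularNbhd (n := n) e ε ν r) (y : M)
    (v : EuclideanSpace ℝ (Fin k)) : ∀ᶠ t in 𝓝 (0 : ℝ), AffineMap.lineMap (e y) v t ∈ ν :=
  AffineMap.lineMap_continuous.continuousAt.preimage_mem_nhds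
    (h.1.mem_nhds (by simpa using h.2.1 ⟨y, rfl⟩))

theorem mem_of_norm_sub_lt [CompactSpace M] (h : IsTubularNbhd (n := n) e ε ν r)
    (he : Continuous e) {v : EuclideanSpace ℝ (Fin k)} {y : M} (hvy : ‖v - e y‖ < ε) : v ∈ ν := by
  obtain ⟨y₀, -, hy₀⟩ := isCompact_univ.exists_isMinOn ⟨y, mem_univ y⟩
    (continuous_norm.comp (continuous_const.sub he)).continuousOn
  have hnearest : ∀ y', ‖v - e y₀‖ ≤ ‖v - e y'‖ := fun y' => hy₀ (mem_univ y')
  obtain ⟨t, hxν, ht⟩ := ((eventually_nhdsWithin_of_eventually_nhds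
    (h.eventually_lineMap_mem y₀ v)).and (Ioc_mem_nhdsGT zero_lt_one)).exists
  have hrx := h.retract_eq_of_forall_norm_le hxν fun y' =>
    norm_lineMap_sub_le_of_norm_sub_le (Ioc_subset_Icc_self ht) (hnearest y')
  have hnormal := h.isNormalVector_sub_of_retract_eq hxν hrx
  rw [← vsub_eq_sub, AffineMap.lineMap_vsub_left, vsub_eq_sub] at hnormal
  simpa using
    h.add_mem_of_isNormalVector (hnormal.of_smul ht.1.ne') ((hnearest y).trans_lt hvy)

end IsTubularNbhd

end Tubular

theorem stmt5_general {n k : ℕ} {M : Type*} [TopologicalSpace M]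
    [ChartedSpace (EuclideanSpace ℝ (Fin n)) M] [IsManifold (𝓡 n) (⊤ : ℕ∞) M]
    [CompactSpace M]
    (e : M → EuclideanSpace ℝ (Fin k)) (he : IsSmoothEmbedding (n := n) e)
    (ε : ℝ) (ν : Set (EuclideanSpace ℝ (Fin k)))
    (r : EuclideanSpace ℝ (Fin k) → EuclideanSpace ℝ (Fin k))
    (h : IsTubularNbhd (n := n) e ε ν r) :
    ∀ v : EuclideanSpace ℝ (Fin k), v ∉ ν → ∀ y : M,
      ε ≤ ‖v - e y‖ ∧ v - e y ∉ Metric.ball (0 : EuclideanSpace ℝ (Fin k)) ε := by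
  intro v hv y
  have hfar : ε ≤ ‖v - e y‖ :=
    not_lt.1 fun hlt => hv (h.mem_of_norm_sub_lt he.2.1.continuous hlt)
  exact ⟨hfar, by simpa using hfar⟩

/-- Points outside an `ε`-tubular neighborhood are at distance at least `ε` from `e(M)`;
hence the Alexander–Atiyah duality map `(v, y) ↦ v - e y` sends `(ℝ^k - ν) × M` into the
complement of the open `ε`-ball about the origin. -/
theorem stmt5 {n k : ℕ} {M : Type*} [TopologicalSpace M]
    [ChartedSpace (EuclideanSpace ℝ (Fin n)) M] [IsManifold (𝓡 n) (⊤ : ℕ∞) M]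
    [CompactSpace M]
    (e : M → EuclideanSpace ℝ (Fin k)) (he : IsSmoothEmbedding (n := n) e)
    (ε : ℝ) (hε : 0 < ε) (ν : Set (EuclideanSpace ℝ (Fin k)))
    (r : EuclideanSpace ℝ (Fin k) → EuclideanSpace ℝ (Fin k))
    (h : IsTubularNbhd (n := n) e ε ν r) :
    ∀ v : EuclideanSpace ℝ (Fin k), v ∉ ν → ∀ y : M,
      ε ≤ ‖v - e y‖ ∧ v - e y ∉ Metric.ball (0 : EuclideanSpace ℝ (Fin k)) ε :=
  stmt5_general e he ε ν r h
end

section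
/- Let K ⊆ ℝ^k be a nonempty compact set and U ⊆ ℝ^k a set such that every x ∈ U has a unique nearest point in K; that is, for each x ∈ U there is a unique n(x) ∈ K with ‖x − n(x)‖ = infDist(x, K). Then the nearest-point map n : U → K is continuous. -/
open Metric Set Filter Topology

/-- If every point of `U ⊆ ℝ^k` has a unique nearest point in the nonempty compact set `K`,
then the nearest-point map is continuous on `U`. -/
theorem stmt14 {k : ℕ} (K : Set (EuclideanSpace ℝ (Fin k))) (hK : IsCompact K)
    (hKne : K.Nonempty) (U : Set (EuclideanSpace ℝ (Fin k)))
    (nearest : EuclideanSpace ℝ (Fin k) → EuclideanSpace ℝ (Fin k))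
    (hmem : ∀ x ∈ U, nearest x ∈ K)
    (hdist : ∀ x ∈ U, ‖x - nearest x‖ = infDist x K)
    (huniq : ∀ x ∈ U, ∀ p ∈ K, ‖x - p‖ = infDist x K → p = nearest x) :
    ContinuousOn nearest U := by
  intro x hx
  rw [ContinuousWithinAt, tendsto_iff_ultrafilter]
  intro g hg
  have hgU : U ∈ g := hg self_mem_nhdsWithin
  have hmap : (g.map nearest : Filter _) ≤ 𝓟 K := by
    rw [Ultrafilter.coe_map, le_principal_iff, mem_map]
    exact mem_of_superset hgU fun y hy => hmem y hy
  obtain ⟨p, hpK, hp⟩ := hK.ultrafilter_le_nhds (g.map nearest) hmap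
  rw [Ultrafilter.coe_map] at hp
  have hgx : Tendsto id (g : Filter _) (𝓝 x) := hg.trans nhdsWithin_le_nhds
  have h1 : Tendsto (fun y => ‖y - nearest y‖) (g : Filter _) (𝓝 ‖x - p‖) :=
    (hgx.sub hp).norm
  have h2 : Tendsto (fun y => infDist y K) (g : Filter _) (𝓝 (infDist x K)) :=
    (continuous_infDist_pt K).continuousAt.tendsto.comp hgx
  have heq : (fun y => ‖y - nearest y‖) =ᶠ[(g : Filter _)] fun y => infDist y K :=
    eventually_of_mem hgU hdist
  have hxp : ‖x - p‖ = infDist x K := tendsto_nhds_unique (h1.congr' heq) h2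
  have hpn := huniq x hx p hpK hxp
  rwa [hpn] at hp
end
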